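/- arXiv:math/9808129 — 3 statements merged into one kernel-verified Lean document; each statement's English description precedes it below -/
import Mathlib

section
/- Let S be a free ℤ-module of finite rank with a symmetric bilinear form ⟨·,·⟩ : S × S → ℤ, and let Δ := {d ∈ S : ⟨d,d⟩ = −2}. Let δ ∈ Δ, and let κ ∈ S ⊗ ℝ satisfy ⟨κ,δ⟩ = 0 and ⟨κ,d⟩ ≠ 0 for every d ∈ Δ \ {δ, −δ}. Set Δ⁺_κ := {d ∈ Δ : ⟨κ,d⟩ > 0} and Δ₁⁺ := Δ⁺_κ ∪ {δ}. Then: (a) Δ is the disjoint union of Δ⁺_κ, −Δ⁺_κ and {δ, −δ}; (b) whenever d₁, …, d_m ∈ Δ₁⁺ and n₁, …, n_m are nonnegative integers such that d := n₁d₁ + ⋯ + n_m d_m lies in Δ, one has d ∈ Δ₁⁺; and the same closure property (b) holds for Δ₂⁺ := Δ⁺_κ ∪ {−δ}. -/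
/-!
The pairing `f = ⟨κ, ·⟩` is additive and nonnegative on `Δ⁺_κ ∪ {δ}`, so a nonnegative
combination `d` of such roots has `f d ≥ 0`. If `f d > 0` then `d ∈ Δ⁺_κ`. If `f d = 0`, every
term with positive pairing has coefficient `0`, so `d = k • δ` with `k ≥ 0`, and
`-2 = ⟨kδ, kδ⟩ = -2k²` forces `k = 1`. The partition of `Δ` is the sign of `f` together with
`Δ ∩ ker f = {δ, -δ}`.
-/

open scoped TensorProduct

section Combinations

variable {S : Type*} [AddCommGroup S] {f : S →+ ℝ} {e : S}

lemma apply_natCast_zsmul_nonneg (hfe : f e = 0) {x : S} (hx : 0 < f x ∨ x = e) (k : ℕ) :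
    0 ≤ f ((k : ℤ) • x) := by
  rcases hx with hx | rfl
  · simpa using mul_nonneg (Nat.cast_nonneg k) hx.le
  · simp [hfe]

variable {ι : Type*} [Fintype ι] {d : ι → S}

lemma apply_sum_nonneg (hfe : f e = 0) (hd : ∀ i, 0 < f (d i) ∨ d i = e) (n : ι → ℕ) :
    0 ≤ f (∑ i, (n i : ℤ) • d i) := by
  rw [map_sum]
  exact Finset.sum_nonneg fun i _ => apply_natCast_zsmul_nonneg hfe (hd i) (n i)

lemma sum_eq_zsmul_of_apply_sum_eq_zero (hfe : f e = 0) (hd : ∀ i, 0 < f (d i) ∨ d i = e)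
    (n : ι → ℕ) (h0 : f (∑ i, (n i : ℤ) • d i) = 0) :
    ∑ i, (n i : ℤ) • d i = (∑ i, (n i : ℤ)) • e := by
  rw [map_sum, Finset.sum_eq_zero_iff_of_nonneg
    fun i _ => apply_natCast_zsmul_nonneg hfe (hd i) (n i)] at h0
  refine (Finset.sum_congr rfl fun i hi => ?_).trans (map_sum (zmultiplesHom S e) _ _).symm
  change (n i : ℤ) • d i = (n i : ℤ) • e
  rcases hd i with hpos | rfl
  · have hni : (n i : ℝ) * f (d i) = 0 := by simpa using h0 i hi
    have : n i = 0 := by exact_mod_cast (mul_eq_zero.mp hni).resolve_right hpos.ne'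
    simp [this]
  · rfl

end Combinations

section Roots

variable {S : Type*} [AddCommGroup S] [Module ℤ S] (B : S →ₗ[ℤ] S →ₗ[ℤ] ℤ) (f : S →+ ℝ)

def rootSet : Set S := {d | B d d = -2}

/-- The set `Δ⁺_κ` of the paper, for `f = ⟨κ, ·⟩`. -/
def posRoots : Set S := {d ∈ rootSet B | 0 < f d}

variable {B f}

lemma neg_mem_rootSet {d : S} (hd : d ∈ rootSet B) : -d ∈ rootSet B := by
  simpa [rootSet] using hd

lemma eq_one_of_zsmul_mem_rootSet {e : S} {k : ℤ} (he : e ∈ rootSet B)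
    (hk : k • e ∈ rootSet B) (hk0 : 0 ≤ k) : k = 1 := by
  have hkk : k * k * B e e = B e e := by
    simp only [rootSet, Set.mem_ofPred_eq, map_zsmul, LinearMap.smul_apply, smul_eq_mul] at hk he
    linarith
  rw [he] at hkk
  nlinarith

lemma rootSet_eq_union {δ : S} (hδ : δ ∈ rootSet B)
    (hf : ∀ d ∈ rootSet B, d ≠ δ → d ≠ -δ → f d ≠ 0) :
    rootSet B = posRoots B f ∪ -posRoots B f ∪ {δ, -δ} := by
  ext d
  refine ⟨fun hd => ?_, ?_⟩
  · by_cases hdδ : d = δ ∨ d = -δ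
    · exact Or.inr hdδ
    rcases (hf d hd (fun h => hdδ (.inl h)) (fun h => hdδ (.inr h))).lt_or_gt with hneg | hpos
    · exact Or.inl (Or.inr ⟨neg_mem_rootSet hd, by simpa using hneg⟩)
    · exact Or.inl (Or.inl ⟨hd, hpos⟩)
  · rintro ((hd | hd) | rfl | rfl)
    · exact hd.1
    · simpa using neg_mem_rootSet hd.1
    · exact hδ
    · exact neg_mem_rootSet hδ

lemma disjoint_posRoots_neg : Disjoint (posRoots B f) (-posRoots B f) :=
  Set.disjoint_left.mpr fun _ hd hd' => by
    have := hd'.2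
    simp only [map_neg] at this
    linarith [hd.2]

lemma disjoint_posRoots_of_apply_eq_zero {Z : Set S} (hZ : ∀ z ∈ Z, f z = 0) :
    Disjoint (posRoots B f) Z :=
  Set.disjoint_left.mpr fun d hd hdZ => (hd.2.ne' (hZ d hdZ)).elim

lemma disjoint_neg_posRoots_of_apply_eq_zero {Z : Set S} (hZ : ∀ z ∈ Z, f z = 0) :
    Disjoint (-posRoots B f) Z :=
  Set.disjoint_left.mpr fun d hd hdZ => by
    have := hd.2
    rw [map_neg, hZ d hdZ, neg_zero] at this
    exact this.false

lemma sum_mem_posRoots_union_singleton {ι : Type*} [Fintype ι] {e : S} (he : e ∈ rootSet B)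
    (hfe : f e = 0) {d : ι → S} (hd : ∀ i, d i ∈ posRoots B f ∪ {e}) (n : ι → ℕ)
    (hs : ∑ i, (n i : ℤ) • d i ∈ rootSet B) :
    ∑ i, (n i : ℤ) • d i ∈ posRoots B f ∪ {e} := by
  have hd' : ∀ i, 0 < f (d i) ∨ d i = e := fun i => (hd i).imp And.right id
  rcases (apply_sum_nonneg hfe hd' n).eq_or_lt with h0 | hpos
  · right
    rw [sum_eq_zsmul_of_apply_sum_eq_zero hfe hd' n h0.symm] at hs ⊢
    rw [eq_one_of_zsmul_mem_rootSet he hs (by positivity), one_smul]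
    rfl
  · exact Or.inl ⟨hs, hpos⟩

end Roots

theorem stmt_1_general
    (S : Type) [AddCommGroup S] [Module ℤ S]
    (B : S →ₗ[ℤ] S →ₗ[ℤ] ℤ)
    (Bℝ : (ℝ ⊗[ℤ] S) →ₗ[ℝ] (ℝ ⊗[ℤ] S) →ₗ[ℝ] ℝ)
    (Δ : Set S) (hΔ : Δ = {d : S | B d d = -2})
    (δ : S) (hδ : δ ∈ Δ)
    (κ : ℝ ⊗[ℤ] S)
    (pair : S → ℝ) (hpair : ∀ d : S, pair d = Bℝ κ ((1 : ℝ) ⊗ₜ[ℤ] d))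
    (hκδ : pair δ = 0)
    (hκd : ∀ d ∈ Δ, d ≠ δ → d ≠ -δ → pair d ≠ 0)
    (Δplus : Set S) (hΔplus : Δplus = {d ∈ Δ | 0 < pair d})
    (Δ₁ Δ₂ : Set S) (hΔ₁ : Δ₁ = Δplus ∪ {δ}) (hΔ₂ : Δ₂ = Δplus ∪ {-δ}) :
    (Δ = Δplus ∪ -Δplus ∪ {δ, -δ} ∧
      Disjoint Δplus (-Δplus) ∧ Disjoint Δplus ({δ, -δ} : Set S) ∧
      Disjoint (-Δplus) ({δ, -δ} : Set S)) ∧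
    (∀ (m : ℕ) (d : Fin m → S) (n : Fin m → ℕ),
      (∀ i, d i ∈ Δ₁) → (∑ i, (n i : ℤ) • d i) ∈ Δ → (∑ i, (n i : ℤ) • d i) ∈ Δ₁) ∧
    (∀ (m : ℕ) (d : Fin m → S) (n : Fin m → ℕ),
      (∀ i, d i ∈ Δ₂) → (∑ i, (n i : ℤ) • d i) ∈ Δ → (∑ i, (n i : ℤ) • d i) ∈ Δ₂) := by
  set f : S →+ ℝ := (Bℝ κ).toAddMonoidHom.comp (TensorProduct.mk ℤ ℝ S 1).toAddMonoidHom
  obtain rfl : pair = f := funext hpair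
  obtain rfl : Δ = rootSet B := hΔ
  obtain rfl : Δplus = posRoots B f := hΔplus
  subst hΔ₁ hΔ₂
  have hκδ' : f (-δ) = 0 := by rw [map_neg, hκδ, neg_zero]
  have hδδ : ∀ z ∈ ({δ, -δ} : Set S), f z = 0 := by
    rintro z (rfl | rfl) <;> assumption
  exact ⟨⟨rootSet_eq_union hδ hκd, disjoint_posRoots_neg,
    disjoint_posRoots_of_apply_eq_zero hδδ, disjoint_neg_posRoots_of_apply_eq_zero hδδ⟩,
    fun m d n => sum_mem_posRoots_union_singleton hδ hκδ (n := n),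
    fun m d n => sum_mem_posRoots_union_singleton (neg_mem_rootSet hδ) hκδ' (n := n)⟩

/-- Lemma 2.2 (root-partition form): for a lattice `S` with roots
`Δ = {d | ⟨d,d⟩ = -2}`, an element `κ ∈ S ⊗ ℝ` orthogonal to a root `δ` but to no
other root gives a partition of `Δ`, and `Δ₁⁺ = Δ⁺_κ ∪ {δ}`, `Δ₂⁺ = Δ⁺_κ ∪ {-δ}`
satisfy the positivity condition (P1). -/
theorem stmt_1
    (S : Type) [AddCommGroup S] [Module ℤ S] [Module.Free ℤ S] [Module.Finite ℤ S]
    (B : S →ₗ[ℤ] S →ₗ[ℤ] ℤ) (hB : ∀ x y : S, B x y = B y x)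
    (Bℝ : (ℝ ⊗[ℤ] S) →ₗ[ℝ] (ℝ ⊗[ℤ] S) →ₗ[ℝ] ℝ)
    (hBℝ : ∀ x y : S, Bℝ ((1 : ℝ) ⊗ₜ[ℤ] x) ((1 : ℝ) ⊗ₜ[ℤ] y) = (B x y : ℝ))
    (Δ : Set S) (hΔ : Δ = {d : S | B d d = -2})
    (δ : S) (hδ : δ ∈ Δ)
    (κ : ℝ ⊗[ℤ] S)
    (pair : S → ℝ) (hpair : ∀ d : S, pair d = Bℝ κ ((1 : ℝ) ⊗ₜ[ℤ] d))
    (hκδ : pair δ = 0)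
    (hκd : ∀ d ∈ Δ, d ≠ δ → d ≠ -δ → pair d ≠ 0)
    (Δplus : Set S) (hΔplus : Δplus = {d ∈ Δ | 0 < pair d})
    (Δ₁ Δ₂ : Set S) (hΔ₁ : Δ₁ = Δplus ∪ {δ}) (hΔ₂ : Δ₂ = Δplus ∪ {-δ}) :
    (Δ = Δplus ∪ -Δplus ∪ {δ, -δ} ∧
      Disjoint Δplus (-Δplus) ∧ Disjoint Δplus ({δ, -δ} : Set S) ∧
      Disjoint (-Δplus) ({δ, -δ} : Set S)) ∧
    (∀ (m : ℕ) (d : Fin m → S) (n : Fin m → ℕ),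
      (∀ i, d i ∈ Δ₁) → (∑ i, (n i : ℤ) • d i) ∈ Δ → (∑ i, (n i : ℤ) • d i) ∈ Δ₁) ∧
    (∀ (m : ℕ) (d : Fin m → S) (n : Fin m → ℕ),
      (∀ i, d i ∈ Δ₂) → (∑ i, (n i : ℤ) • d i) ∈ Δ → (∑ i, (n i : ℤ) • d i) ∈ Δ₂) :=
  stmt_1_general S B Bℝ Δ hΔ δ hδ κ pair hpair hκδ hκd Δplus hΔplus Δ₁ Δ₂ hΔ₁ hΔ₂
end

section
/- Let C₀, C ≥ 0. Let (Z, μ) be a measure space and r : Z → [0,∞) a measurable function such that μ(r⁻¹(A)) ≤ C₀ ∫_A ρ dρ for every measurable A ⊆ [0,∞). Let h : Z × ℂ → ℂ be measurable, and suppose there are functions ℓ, b : Z × ℂ → ℂ and g := h − ℓ − b such that for every z ∈ Z the map v ↦ ℓ(z,v) is ℝ-linear, and for all z ∈ Z and all v ∈ ℂ with |v| ≤ r(z) + 1 one has |h(z,v)| ≤ C|v|³(1 + r(z))⁻³, |g(z,v)| ≤ C|v|(1 + r(z))⁻¹, and |b(z,v)| ≤ C|v|²(1 + r(z))⁻². For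 s > 0 and z ∈ Z set I₁(s,z) := ∫_{{v ∈ ℂ : |v| ≤ r(z)+1}} s⁻² e^{−|v|²/s} h(z,v) dA(v). Then there is a constant C′ depending only on C and C₀ such that for every T > 1, ∫₀^T (1/s) ∫_{{z : r(z) ≤ √T}} |I₁(s,z)| dμ(z) ds ≤ C′(log T + 1). -/
open MeasureTheory

open MeasureTheory Set

lemma cube_gauss {y : ℝ} (hy : 0 ≤ y) : y ^ 3 * Real.exp (-(y ^ 2) / 2) ≤ 54 := by
  have h1 : y / 3 ≤ Real.exp (y / 3) := by
    have := Real.add_one_le_exp (y / 3); linarith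
  have h4 : Real.exp (y / 3) ^ 3 = Real.exp y := by
    rw [← Real.exp_nat_mul]; norm_num; ring
  have h2 : y ^ 3 ≤ 27 * Real.exp y := by
    have h3 : (y / 3) ^ 3 ≤ Real.exp (y / 3) ^ 3 :=
      pow_le_pow_left₀ (by positivity) h1 3
    rw [h4] at h3
    nlinarith [h3]
  have h5 : Real.exp (y - y ^ 2 / 2) ≤ Real.exp (1 / 2) := by
    apply Real.exp_le_exp.mpr; nlinarith [sq_nonneg (y - 1)]
  have e2 : Real.exp (1 / 2) * Real.exp (1 / 2) = Real.exp 1 := by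
    rw [← Real.exp_add]; norm_num
  have h6 : Real.exp (1 / 2) ≤ 2 := by
    nlinarith [Real.exp_one_lt_d9, Real.exp_pos (1 / 2)]
  have h7 : Real.exp y * Real.exp (-(y ^ 2) / 2) = Real.exp (y - y ^ 2 / 2) := by
    rw [← Real.exp_add]; ring_nf
  calc y ^ 3 * Real.exp (-(y ^ 2) / 2)
      ≤ 27 * Real.exp y * Real.exp (-(y ^ 2) / 2) := by
        have := (Real.exp_pos (-(y ^ 2) / 2)).le
        nlinarith [Real.exp_pos (-(y ^ 2) / 2)]
    _ = 27 * Real.exp (y - y ^ 2 / 2) := by rw [mul_assoc, h7]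
    _ ≤ 27 * 2 := by nlinarith
    _ ≤ 54 := by norm_num
open scoped ENNReal
lemma weight_bound {s u : ℝ} (hs : 0 < s) (hu : 0 ≤ u) :
    (s ^ 2)⁻¹ * Real.exp (-u ^ 2 / s) * u ^ 3 ≤
      54 * (Real.sqrt s)⁻¹ * Real.exp (-((2 * s)⁻¹ * u ^ 2)) := by
  have hss : 0 < Real.sqrt s := Real.sqrt_pos.2 hs
  have hsq : Real.sqrt s ^ 2 = s := Real.sq_sqrt hs.le
  have he : Real.exp (-((u / Real.sqrt s) ^ 2) / 2) = Real.exp (-((2 * s)⁻¹ * u ^ 2)) := by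
    congr 1
    rw [div_pow, hsq]
    field_simp
  have hcube := cube_gauss (y := u / Real.sqrt s) (by positivity)
  rw [he] at hcube
  have h3 : Real.sqrt s ^ 3 = s * Real.sqrt s := by
    rw [pow_succ, hsq]
  have h2 : (u / Real.sqrt s) ^ 3 = u ^ 3 / (s * Real.sqrt s) := by
    rw [div_pow, h3]
  rw [h2] at hcube
  have key : u ^ 3 * Real.exp (-((2 * s)⁻¹ * u ^ 2)) ≤ 54 * (s * Real.sqrt s) := by
    have hpos : 0 < s * Real.sqrt s := by positivity
    rw [div_mul_eq_mul_div, div_le_iff₀ hpos] at hcube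
    linarith [hcube]
  have hsplit : Real.exp (-u ^ 2 / s) =
      Real.exp (-((2 * s)⁻¹ * u ^ 2)) * Real.exp (-((2 * s)⁻¹ * u ^ 2)) := by
    rw [← Real.exp_add]
    congr 1
    field_simp
    ring
  have hs2 : (s : ℝ) ^ 2 = (s * Real.sqrt s) * Real.sqrt s := by
    nlinarith [hsq]
  calc (s ^ 2)⁻¹ * Real.exp (-u ^ 2 / s) * u ^ 3
      = (s ^ 2)⁻¹ * Real.exp (-((2 * s)⁻¹ * u ^ 2)) *
        (u ^ 3 * Real.exp (-((2 * s)⁻¹ * u ^ 2))) := by rw [hsplit]; ring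
    _ ≤ (s ^ 2)⁻¹ * Real.exp (-((2 * s)⁻¹ * u ^ 2)) * (54 * (s * Real.sqrt s)) := by
        have : (0:ℝ) ≤ (s ^ 2)⁻¹ * Real.exp (-((2 * s)⁻¹ * u ^ 2)) := by positivity
        exact mul_le_mul_of_nonneg_left key this
    _ = 54 * (Real.sqrt s)⁻¹ * Real.exp (-((2 * s)⁻¹ * u ^ 2)) := by
        rw [hs2]
        field_simp
lemma lintegral_gauss_real {b : ℝ} (hb : 0 < b) :
    ∫⁻ x : ℝ, ENNReal.ofReal (Real.exp (-(b * x ^ 2))) =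
      ENNReal.ofReal (Real.sqrt (Real.pi / b)) := by
  rw [← ofReal_integral_eq_lintegral_ofReal]
  · congr 1
    simpa using integral_gaussian b
  · simpa using integrable_exp_neg_mul_sq hb
  · exact ae_of_all _ fun x => (Real.exp_pos _).le

lemma lintegral_gauss_complex {b : ℝ} (hb : 0 < b) :
    ∫⁻ v : ℂ, ENNReal.ofReal (Real.exp (-(b * ‖v‖ ^ 2))) = ENNReal.ofReal (Real.pi / b) := by
  have hnorm : ∀ v : ℂ, ‖v‖ ^ 2 = v.re ^ 2 + v.im ^ 2 := by
    intro v
    rw [Complex.sq_norm, Complex.normSq_apply]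
    ring
  set F : ℝ × ℝ → ENNReal := fun p => ENNReal.ofReal (Real.exp (-(b * p.1 ^ 2))) *
        ENNReal.ofReal (Real.exp (-(b * p.2 ^ 2))) with hF
  have hFm : Measurable F := by fun_prop
  calc ∫⁻ v : ℂ, ENNReal.ofReal (Real.exp (-(b * ‖v‖ ^ 2)))
      = ∫⁻ v : ℂ, F (Complex.measurableEquivRealProd v) := by
        apply lintegral_congr
        intro v
        simp only [hF, Complex.measurableEquivRealProd_apply]
        rw [← ENNReal.ofReal_mul (Real.exp_pos _).le, ← Real.exp_add, hnorm v]
        congr 2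
        ring
    _ = ∫⁻ p : ℝ × ℝ, F p := Complex.volume_preserving_equiv_real_prod.lintegral_comp hFm
    _ = (∫⁻ x : ℝ, ENNReal.ofReal (Real.exp (-(b * x ^ 2)))) *
          ∫⁻ y : ℝ, ENNReal.ofReal (Real.exp (-(b * y ^ 2))) := by
        rw [MeasureTheory.Measure.volume_eq_prod]
        exact lintegral_prod_mul (f := fun x : ℝ => ENNReal.ofReal (Real.exp (-(b * x ^ 2))))
          (g := fun y : ℝ => ENNReal.ofReal (Real.exp (-(b * y ^ 2)))) (by fun_prop) (by fun_prop)
    _ = ENNReal.ofReal (Real.pi / b) := by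
        rw [lintegral_gauss_real hb,
          ← ENNReal.ofReal_mul (Real.sqrt_nonneg _), Real.mul_self_sqrt (by positivity)]
lemma myBallEq (R : ℝ) : {v : ℂ | ‖v‖ ≤ R} = Metric.closedBall (0 : ℂ) R := by
  ext v; simp [Metric.mem_closedBall, dist_zero_right]

lemma step0 {s : ℝ} (R : ℝ) (h : ℂ → ℂ) :
    ENNReal.ofReal ‖∫ v in {v : ℂ | ‖v‖ ≤ R}, ((s ^ 2)⁻¹ * Real.exp (-‖v‖ ^ 2 / s)) • h v‖ ≤
      ∫⁻ v in {v : ℂ | ‖v‖ ≤ R},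
        ENNReal.ofReal ‖((s ^ 2)⁻¹ * Real.exp (-‖v‖ ^ 2 / s)) • h v‖ := by
  simp only [ofReal_norm_eq_enorm]
  exact enorm_integral_le_lintegral_enorm _

lemma boundA {C s R : ℝ} (hC : 0 ≤ C) (hs : 0 < s) (hR : 1 ≤ R) (h : ℂ → ℂ)
    (hb : ∀ v : ℂ, ‖v‖ ≤ R → ‖h v‖ ≤ C * ‖v‖ ^ 3 * (R ^ 3)⁻¹) :
    ENNReal.ofReal ‖∫ v in {v : ℂ | ‖v‖ ≤ R}, ((s ^ 2)⁻¹ * Real.exp (-‖v‖ ^ 2 / s)) • h v‖ ≤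
      ENNReal.ofReal (108 * Real.pi * C * Real.sqrt s * (R ^ 3)⁻¹) := by
  have hR0 : (0:ℝ) < R := lt_of_lt_of_le one_pos hR
  have hss : 0 < Real.sqrt s := Real.sqrt_pos.2 hs
  have hBmeas : MeasurableSet {v : ℂ | ‖v‖ ≤ R} := by
    rw [myBallEq]; exact measurableSet_closedBall
  calc ENNReal.ofReal ‖∫ v in {v : ℂ | ‖v‖ ≤ R}, ((s ^ 2)⁻¹ * Real.exp (-‖v‖ ^ 2 / s)) • h v‖
      ≤ ∫⁻ v in {v : ℂ | ‖v‖ ≤ R},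
          ENNReal.ofReal ‖((s ^ 2)⁻¹ * Real.exp (-‖v‖ ^ 2 / s)) • h v‖ := step0 R h
    _ ≤ ∫⁻ v in {v : ℂ | ‖v‖ ≤ R},
          ENNReal.ofReal (54 * C * (R ^ 3)⁻¹ * (Real.sqrt s)⁻¹ *
            Real.exp (-((2 * s)⁻¹ * ‖v‖ ^ 2))) := by
        apply setLIntegral_mono' hBmeas
        intro v hv
        apply ENNReal.ofReal_le_ofReal
        have hnn : (0:ℝ) ≤ (s ^ 2)⁻¹ * Real.exp (-‖v‖ ^ 2 / s) := by positivity
        rw [norm_smul, Real.norm_eq_abs, abs_of_nonneg hnn]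
        calc (s ^ 2)⁻¹ * Real.exp (-‖v‖ ^ 2 / s) * ‖h v‖
            ≤ (s ^ 2)⁻¹ * Real.exp (-‖v‖ ^ 2 / s) * (C * ‖v‖ ^ 3 * (R ^ 3)⁻¹) := by
              exact mul_le_mul_of_nonneg_left (hb v hv) hnn
          _ = ((s ^ 2)⁻¹ * Real.exp (-‖v‖ ^ 2 / s) * ‖v‖ ^ 3) * (C * (R ^ 3)⁻¹) := by ring
          _ ≤ (54 * (Real.sqrt s)⁻¹ * Real.exp (-((2 * s)⁻¹ * ‖v‖ ^ 2))) * (C * (R ^ 3)⁻¹) := by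
              apply mul_le_mul_of_nonneg_right (weight_bound hs (norm_nonneg v))
              positivity
          _ = 54 * C * (R ^ 3)⁻¹ * (Real.sqrt s)⁻¹ * Real.exp (-((2 * s)⁻¹ * ‖v‖ ^ 2)) := by
              ring
    _ ≤ ∫⁻ v : ℂ,
          ENNReal.ofReal (54 * C * (R ^ 3)⁻¹ * (Real.sqrt s)⁻¹ *
            Real.exp (-((2 * s)⁻¹ * ‖v‖ ^ 2))) := setLIntegral_le_lintegral _ _
    _ = ENNReal.ofReal (54 * C * (R ^ 3)⁻¹ * (Real.sqrt s)⁻¹) *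
          ∫⁻ v : ℂ, ENNReal.ofReal (Real.exp (-((2 * s)⁻¹ * ‖v‖ ^ 2))) := by
        rw [← lintegral_const_mul' _ _ ENNReal.ofReal_ne_top]
        apply lintegral_congr
        intro v
        rw [← ENNReal.ofReal_mul (by positivity)]
    _ = ENNReal.ofReal (54 * C * (R ^ 3)⁻¹ * (Real.sqrt s)⁻¹) *
          ENNReal.ofReal (Real.pi / (2 * s)⁻¹) := by
        rw [lintegral_gauss_complex (by positivity)]
    _ ≤ ENNReal.ofReal (108 * Real.pi * C * Real.sqrt s * (R ^ 3)⁻¹) := by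
        rw [← ENNReal.ofReal_mul (by positivity)]
        apply ENNReal.ofReal_le_ofReal
        have hsq : Real.sqrt s * Real.sqrt s = s := Real.mul_self_sqrt hs.le
        rw [div_eq_mul_inv, inv_inv]
        have : 54 * C * (R ^ 3)⁻¹ * (Real.sqrt s)⁻¹ * (Real.pi * (2 * s)) =
            108 * Real.pi * C * Real.sqrt s * (R ^ 3)⁻¹ := by
          field_simp
          linear_combination (-(108 * C)) * hsq
        rw [this]

lemma boundB {C s R : ℝ} (hC : 0 ≤ C) (hs : 0 < s) (hR : 1 ≤ R) (h : ℂ → ℂ)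
    (hb : ∀ v : ℂ, ‖v‖ ≤ R → ‖h v‖ ≤ C * ‖v‖ ^ 3 * (R ^ 3)⁻¹) :
    ENNReal.ofReal ‖∫ v in {v : ℂ | ‖v‖ ≤ R}, ((s ^ 2)⁻¹ * Real.exp (-‖v‖ ^ 2 / s)) • h v‖ ≤
      ENNReal.ofReal (108 * Real.pi * C * (s ^ 2)⁻¹ * R ^ 2) := by
  have hR0 : (0:ℝ) < R := lt_of_lt_of_le one_pos hR
  have hBmeas : MeasurableSet {v : ℂ | ‖v‖ ≤ R} := by
    rw [myBallEq]; exact measurableSet_closedBall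
  calc ENNReal.ofReal ‖∫ v in {v : ℂ | ‖v‖ ≤ R}, ((s ^ 2)⁻¹ * Real.exp (-‖v‖ ^ 2 / s)) • h v‖
      ≤ ∫⁻ v in {v : ℂ | ‖v‖ ≤ R},
          ENNReal.ofReal ‖((s ^ 2)⁻¹ * Real.exp (-‖v‖ ^ 2 / s)) • h v‖ := step0 R h
    _ ≤ ∫⁻ _ in {v : ℂ | ‖v‖ ≤ R}, ENNReal.ofReal (C * (s ^ 2)⁻¹) := by
        apply setLIntegral_mono' hBmeas
        intro v hv
        apply ENNReal.ofReal_le_ofReal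
        have hnn : (0:ℝ) ≤ (s ^ 2)⁻¹ * Real.exp (-‖v‖ ^ 2 / s) := by positivity
        rw [norm_smul, Real.norm_eq_abs, abs_of_nonneg hnn]
        have he1 : Real.exp (-‖v‖ ^ 2 / s) ≤ 1 :=
          Real.exp_le_one_iff.2 (div_nonpos_of_nonpos_of_nonneg (neg_nonpos.2 (by positivity)) hs.le)
        have h1 := hb v hv
        have h2 : ‖v‖ ^ 3 ≤ R ^ 3 := pow_le_pow_left₀ (norm_nonneg v) hv 3
        have h3 : (0:ℝ) < R ^ 3 := by positivity
        have h4 : R ^ 3 * (R ^ 3)⁻¹ = 1 := mul_inv_cancel₀ (ne_of_gt h3)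
        have h5 : ‖h v‖ ≤ C := by
          have h5' : C * ‖v‖ ^ 3 * (R ^ 3)⁻¹ ≤ C * R ^ 3 * (R ^ 3)⁻¹ := by gcongr
          rw [mul_assoc C (R ^ 3) (R ^ 3)⁻¹, h4, mul_one] at h5'
          linarith
        have h6 : (0:ℝ) < (s ^ 2)⁻¹ := by positivity
        calc (s ^ 2)⁻¹ * Real.exp (-‖v‖ ^ 2 / s) * ‖h v‖
            ≤ (s ^ 2)⁻¹ * 1 * C := by
              apply mul_le_mul (mul_le_mul le_rfl he1 (Real.exp_pos _).le h6.le) h5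
                (norm_nonneg _) (by positivity)
          _ = C * (s ^ 2)⁻¹ := by ring
    _ = ENNReal.ofReal (C * (s ^ 2)⁻¹) * volume {v : ℂ | ‖v‖ ≤ R} := setLIntegral_const _ _
    _ ≤ ENNReal.ofReal (108 * Real.pi * C * (s ^ 2)⁻¹ * R ^ 2) := by
        rw [myBallEq, Complex.volume_closedBall]
        rw [← ENNReal.ofReal_pow hR0.le, ← ENNReal.ofReal_coe_nnreal]
        rw [← ENNReal.ofReal_mul (by positivity), ← ENNReal.ofReal_mul (by positivity)]
        apply ENNReal.ofReal_le_ofReal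
        rw [NNReal.coe_real_pi]
        nlinarith [mul_nonneg (mul_nonneg hC (inv_pos.2 (pow_pos hs 2)).le)
          (mul_nonneg (sq_nonneg R) Real.pi_pos.le)]
lemma helper1 {a : ℝ} (ha : 0 ≤ a) :
    ∫⁻ s in Ioc (0:ℝ) a, ENNReal.ofReal (Real.sqrt s)⁻¹ ≤ ENNReal.ofReal (2 * Real.sqrt a) := by
  have hcongr : ∀ s ∈ Ioc (0:ℝ) a,
      ENNReal.ofReal (Real.sqrt s)⁻¹ = ENNReal.ofReal (s ^ (-(1/2) : ℝ)) := by
    intro s hs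
    rw [Real.rpow_neg hs.1.le, Real.sqrt_eq_rpow]
  rw [setLIntegral_congr_fun measurableSet_Ioc hcongr]
  have hint : IntegrableOn (fun s : ℝ => s ^ (-(1/2) : ℝ)) (Ioc 0 a) := by
    have := (intervalIntegral.intervalIntegrable_rpow' (a := 0) (b := a)
      (r := -(1/2)) (by norm_num))
    rwa [intervalIntegrable_iff, uIoc_of_le ha] at this
  rw [← ofReal_integral_eq_lintegral_ofReal hint
    ((ae_restrict_iff' measurableSet_Ioc).2 (ae_of_all _ fun s hs =>
      (Real.rpow_pos_of_pos hs.1 _).le))]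
  apply ENNReal.ofReal_le_ofReal
  rw [← intervalIntegral.integral_of_le ha, integral_rpow (Or.inl (by norm_num))]
  rw [Real.zero_rpow (by norm_num), Real.sqrt_eq_rpow]
  norm_num
  rw [div_le_iff₀ (by norm_num : (0:ℝ) < 1/2)]
  linarith [Real.rpow_nonneg ha (1/2 : ℝ)]

lemma helper2 {a : ℝ} (ha : 1 ≤ a) :
    ∫⁻ s in Ioi a, ENNReal.ofReal (s⁻¹ * (s ^ 2)⁻¹) ≤ ENNReal.ofReal (a ^ 2)⁻¹ := by
  have ha0 : (0:ℝ) < a := lt_of_lt_of_le one_pos ha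
  have hcongr : ∀ s ∈ Ioi a,
      ENNReal.ofReal (s⁻¹ * (s ^ 2)⁻¹) = ENNReal.ofReal (s ^ (-3 : ℝ)) := by
    intro s hs
    have hs0 : (0:ℝ) < s := lt_trans ha0 hs
    congr 1
    rw [show (-3 : ℝ) = -(3 : ℕ) by norm_num, Real.rpow_neg hs0.le, Real.rpow_natCast]
    field_simp
  rw [setLIntegral_congr_fun measurableSet_Ioi hcongr]
  rw [← ofReal_integral_eq_lintegral_ofReal
    (integrableOn_Ioi_rpow_of_lt (by norm_num) ha0)
    ((ae_restrict_iff' measurableSet_Ioi).2 (ae_of_all _ fun s hs =>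
      (Real.rpow_pos_of_pos (lt_trans ha0 hs) _).le))]
  apply ENNReal.ofReal_le_ofReal
  rw [integral_Ioi_rpow_of_lt (by norm_num) ha0]
  have : a ^ (-3 + 1 : ℝ) = (a ^ 2)⁻¹ := by
    rw [show (-3 + 1 : ℝ) = -(2 : ℕ) by norm_num, Real.rpow_neg ha0.le, Real.rpow_natCast]
  rw [this]
  have hpos : (0:ℝ) < (a ^ 2)⁻¹ := by positivity
  rw [show (-3 + 1 : ℝ) = -2 by norm_num, neg_div_neg_eq]
  linarith

lemma s_integral {K R : ℝ} (T : ℝ) (hK : 0 ≤ K) (hR : 1 ≤ R) :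
    ∫⁻ s in Ioo (0:ℝ) T, ENNReal.ofReal s⁻¹ *
        ENNReal.ofReal (min (K * Real.sqrt s * (R ^ 3)⁻¹) (K * (s ^ 2)⁻¹ * R ^ 2)) ≤
      ENNReal.ofReal (3 * K * (R ^ 2)⁻¹) := by
  have hR0 : (0:ℝ) < R := lt_of_lt_of_le one_pos hR
  set f : ℝ → ℝ≥0∞ := fun s => ENNReal.ofReal s⁻¹ *
    ENNReal.ofReal (min (K * Real.sqrt s * (R ^ 3)⁻¹) (K * (s ^ 2)⁻¹ * R ^ 2)) with hf
  have part1 : ∫⁻ s in Ioc (0:ℝ) (R ^ 2), f s ≤ ENNReal.ofReal (2 * K * (R ^ 2)⁻¹) := by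
    have step : ∫⁻ s in Ioc (0:ℝ) (R ^ 2), f s ≤
        ∫⁻ s in Ioc (0:ℝ) (R ^ 2), ENNReal.ofReal (K * (R ^ 3)⁻¹) *
          ENNReal.ofReal (Real.sqrt s)⁻¹ := by
      apply setLIntegral_mono' measurableSet_Ioc
      intro s hs
      have hs0 : 0 < s := hs.1
      have hss : 0 < Real.sqrt s := Real.sqrt_pos.2 hs0
      rw [hf]
      calc ENNReal.ofReal s⁻¹ *
            ENNReal.ofReal (min (K * Real.sqrt s * (R ^ 3)⁻¹) (K * (s ^ 2)⁻¹ * R ^ 2))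
          ≤ ENNReal.ofReal s⁻¹ * ENNReal.ofReal (K * Real.sqrt s * (R ^ 3)⁻¹) :=
            mul_le_mul_right (ENNReal.ofReal_le_ofReal (min_le_left _ _)) _
        _ = ENNReal.ofReal (s⁻¹ * (K * Real.sqrt s * (R ^ 3)⁻¹)) := by
            rw [← ENNReal.ofReal_mul (by positivity)]
        _ = ENNReal.ofReal (K * (R ^ 3)⁻¹) * ENNReal.ofReal (Real.sqrt s)⁻¹ := by
            rw [← ENNReal.ofReal_mul (by positivity)]
            congr 1
            have hsq : Real.sqrt s * Real.sqrt s = s := Real.mul_self_sqrt hs0.le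
            field_simp
            linear_combination K * hsq
    calc ∫⁻ s in Ioc (0:ℝ) (R ^ 2), f s
        ≤ ∫⁻ s in Ioc (0:ℝ) (R ^ 2), ENNReal.ofReal (K * (R ^ 3)⁻¹) *
            ENNReal.ofReal (Real.sqrt s)⁻¹ := step
      _ = ENNReal.ofReal (K * (R ^ 3)⁻¹) *
            ∫⁻ s in Ioc (0:ℝ) (R ^ 2), ENNReal.ofReal (Real.sqrt s)⁻¹ :=
          lintegral_const_mul' _ _ ENNReal.ofReal_ne_top
      _ ≤ ENNReal.ofReal (K * (R ^ 3)⁻¹) * ENNReal.ofReal (2 * Real.sqrt (R ^ 2)) :=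
          mul_le_mul_right (helper1 (by positivity)) _
      _ = ENNReal.ofReal (2 * K * (R ^ 2)⁻¹) := by
          rw [← ENNReal.ofReal_mul (by positivity), Real.sqrt_sq hR0.le]
          congr 1
          field_simp
  have part2 : ∫⁻ s in Ioi (R ^ 2), f s ≤ ENNReal.ofReal (K * (R ^ 2)⁻¹) := by
    have step : ∫⁻ s in Ioi (R ^ 2), f s ≤
        ∫⁻ s in Ioi (R ^ 2), ENNReal.ofReal (K * R ^ 2) *
          ENNReal.ofReal (s⁻¹ * (s ^ 2)⁻¹) := by
      apply setLIntegral_mono' measurableSet_Ioi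
      intro s hs
      have hs0 : (0:ℝ) < s := lt_trans (by positivity) hs
      rw [hf]
      calc ENNReal.ofReal s⁻¹ *
            ENNReal.ofReal (min (K * Real.sqrt s * (R ^ 3)⁻¹) (K * (s ^ 2)⁻¹ * R ^ 2))
          ≤ ENNReal.ofReal s⁻¹ * ENNReal.ofReal (K * (s ^ 2)⁻¹ * R ^ 2) :=
            mul_le_mul_right (ENNReal.ofReal_le_ofReal (min_le_right _ _)) _
        _ = ENNReal.ofReal (K * R ^ 2) * ENNReal.ofReal (s⁻¹ * (s ^ 2)⁻¹) := by
            rw [← ENNReal.ofReal_mul (by positivity), ← ENNReal.ofReal_mul (by positivity)]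
            congr 1
            ring
    calc ∫⁻ s in Ioi (R ^ 2), f s
        ≤ ∫⁻ s in Ioi (R ^ 2), ENNReal.ofReal (K * R ^ 2) *
            ENNReal.ofReal (s⁻¹ * (s ^ 2)⁻¹) := step
      _ = ENNReal.ofReal (K * R ^ 2) * ∫⁻ s in Ioi (R ^ 2), ENNReal.ofReal (s⁻¹ * (s ^ 2)⁻¹) :=
          lintegral_const_mul' _ _ ENNReal.ofReal_ne_top
      _ ≤ ENNReal.ofReal (K * R ^ 2) * ENNReal.ofReal ((R ^ 2) ^ 2)⁻¹ :=
          mul_le_mul_right (helper2 (one_le_pow₀ hR)) _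
      _ = ENNReal.ofReal (K * (R ^ 2)⁻¹) := by
          rw [← ENNReal.ofReal_mul (by positivity)]
          congr 1
          field_simp
  calc ∫⁻ s in Ioo (0:ℝ) T, f s
      ≤ ∫⁻ s in Ioi (0:ℝ), f s := lintegral_mono_set Ioo_subset_Ioi_self
    _ = ∫⁻ s in Ioc (0:ℝ) (R ^ 2) ∪ Ioi (R ^ 2), f s := by
        rw [Ioc_union_Ioi_eq_Ioi (by positivity)]
    _ = (∫⁻ s in Ioc (0:ℝ) (R ^ 2), f s) + ∫⁻ s in Ioi (R ^ 2), f s :=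
        lintegral_union measurableSet_Ioi Ioc_disjoint_Ioi_same
    _ ≤ ENNReal.ofReal (2 * K * (R ^ 2)⁻¹) + ENNReal.ofReal (K * (R ^ 2)⁻¹) :=
        add_le_add part1 part2
    _ = ENNReal.ofReal (3 * K * (R ^ 2)⁻¹) := by
        rw [← ENNReal.ofReal_add (by positivity) (by positivity)]
        congr 1
        ring
lemma push_lemma {Z : Type} [MeasurableSpace Z] (μ : Measure Z) {C₀ : ℝ}
    {r : Z → ℝ} (hrm : Measurable r) (hr : ∀ z, 0 ≤ r z)
    (hμ : ∀ A : Set ℝ, MeasurableSet A → A ⊆ Set.Ici 0 →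
      μ (r ⁻¹' A) ≤ ENNReal.ofReal C₀ * ∫⁻ ρ in A, ENNReal.ofReal ρ)
    (φ : ℝ → ℝ≥0∞) (hφ : Measurable φ) {c : ℝ} (hc : 0 ≤ c) :
    ∫⁻ z in {z | r z ≤ c}, φ (r z) ∂μ ≤
      ENNReal.ofReal C₀ * ∫⁻ ρ in Icc 0 c, ENNReal.ofReal ρ * φ ρ := by
  have hset : {z | r z ≤ c} = r ⁻¹' Icc 0 c := by
    ext z; simp [mem_preimage, mem_Icc, hr z]
  set ν : Measure ℝ := ENNReal.ofReal C₀ • (volume.withDensity fun ρ => ENNReal.ofReal ρ)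
    with hν
  have hle : (Measure.map r μ).restrict (Icc 0 c) ≤ ν.restrict (Icc 0 c) := by
    rw [Measure.le_iff]
    intro B hB
    rw [Measure.restrict_apply hB, Measure.restrict_apply hB,
      Measure.map_apply hrm (hB.inter measurableSet_Icc)]
    have h1 : (B ∩ Icc 0 c) ⊆ Set.Ici 0 := fun x hx => hx.2.1
    calc μ (r ⁻¹' (B ∩ Icc 0 c)) ≤
        ENNReal.ofReal C₀ * ∫⁻ ρ in B ∩ Icc 0 c, ENNReal.ofReal ρ :=
          hμ _ (hB.inter measurableSet_Icc) h1
      _ = ν (B ∩ Icc 0 c) := by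
          rw [hν, Measure.smul_apply, smul_eq_mul,
            withDensity_apply _ (hB.inter measurableSet_Icc)]
  calc ∫⁻ z in {z | r z ≤ c}, φ (r z) ∂μ
      = ∫⁻ ρ in Icc 0 c, φ ρ ∂(Measure.map r μ) := by
        rw [Measure.restrict_map hrm measurableSet_Icc, lintegral_map hφ hrm, hset]
    _ ≤ ∫⁻ ρ in Icc 0 c, φ ρ ∂ν := lintegral_mono' hle le_rfl
    _ = ENNReal.ofReal C₀ * ∫⁻ ρ in Icc 0 c, ENNReal.ofReal ρ * φ ρ := by
        rw [hν, Measure.restrict_smul, lintegral_smul_measure,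
          restrict_withDensity measurableSet_Icc,
          lintegral_withDensity_eq_lintegral_mul _ (by fun_prop) hφ]
        rfl

lemma log_integral {c : ℝ} (hc : 0 ≤ c) :
    ∫⁻ ρ in Icc (0:ℝ) c, ENNReal.ofReal (ρ * ((ρ + 1) ^ 2)⁻¹) ≤
      ENNReal.ofReal (Real.log (1 + c)) := by
  have step : ∫⁻ ρ in Icc (0:ℝ) c, ENNReal.ofReal (ρ * ((ρ + 1) ^ 2)⁻¹) ≤
      ∫⁻ ρ in Icc (0:ℝ) c, ENNReal.ofReal (1 + ρ)⁻¹ := by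
    apply setLIntegral_mono' measurableSet_Icc
    intro ρ hρ
    apply ENNReal.ofReal_le_ofReal
    have h1 : (0:ℝ) < 1 + ρ := by linarith [hρ.1]
    have h2 : (1 + ρ) * (1 + ρ)⁻¹ = 1 := mul_inv_cancel₀ (ne_of_gt h1)
    have h3 : ((ρ + 1) ^ 2)⁻¹ = (1 + ρ)⁻¹ * (1 + ρ)⁻¹ := by
      rw [← mul_inv]
      congr 1
      ring
    rw [h3]
    nlinarith [inv_nonneg.2 h1.le, hρ.1]
  refine le_trans step ?_
  have hintg : IntegrableOn (fun ρ : ℝ => (1 + ρ)⁻¹) (Icc 0 c) := by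
    apply ContinuousOn.integrableOn_Icc
    exact ContinuousOn.inv₀ (by fun_prop) (fun x hx => by
      have := hx.1; intro hzero; linarith [hx.1])
  rw [← ofReal_integral_eq_lintegral_ofReal hintg
    ((ae_restrict_iff' measurableSet_Icc).2 (ae_of_all _ fun ρ hρ =>
      inv_nonneg.2 (by linarith [hρ.1])))]
  apply ENNReal.ofReal_le_ofReal
  rw [integral_Icc_eq_integral_Ioc, ← intervalIntegral.integral_of_le hc]
  have key : ∫ x in (0:ℝ)..c, (1 + x)⁻¹ = Real.log (1 + c) := by
    have := intervalIntegral.integral_comp_add_left (a := (0:ℝ)) (b := c)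
      (fun y : ℝ => y⁻¹) 1
    simp only [add_zero] at this
    rw [show (fun x : ℝ => (1 + x)⁻¹) = fun x : ℝ => (fun y : ℝ => y⁻¹) (1 + x) from rfl,
      this, integral_inv (by
        intro hmem
        rw [uIcc_of_le (by linarith)] at hmem
        linarith [hmem.1]), div_one]
  rw [key]

/-- Lemma 6.3 (abstract form): Gaussian integrals against the third-order Taylor
remainder `h = g + ℓ + b` of the parametrix density grow at most logarithmically. -/
theorem stmt_3 (C₀ C : ℝ) (hC₀ : 0 ≤ C₀) (hC : 0 ≤ C) :
    ∃ C' : ℝ, ∀ (Z : Type) [MeasurableSpace Z] (μ : Measure Z)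
      (r : Z → ℝ) (_ : Measurable r) (_ : ∀ z, 0 ≤ r z)
      (_ : ∀ A : Set ℝ, MeasurableSet A → A ⊆ Set.Ici 0 →
        μ (r ⁻¹' A) ≤ ENNReal.ofReal C₀ * ∫⁻ ρ in A, ENNReal.ofReal ρ)
      (h ℓ b g : Z × ℂ → ℂ) (_ : Measurable h)
      (_ : g = h - ℓ - b)
      (_ : ∀ z : Z, IsLinearMap ℝ fun v : ℂ => ℓ (z, v))
      (_ : ∀ (z : Z) (v : ℂ), ‖v‖ ≤ r z + 1 →
        ‖h (z, v)‖ ≤ C * ‖v‖ ^ 3 * ((1 + r z) ^ 3)⁻¹)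
      (_ : ∀ (z : Z) (v : ℂ), ‖v‖ ≤ r z + 1 →
        ‖g (z, v)‖ ≤ C * ‖v‖ * (1 + r z)⁻¹)
      (_ : ∀ (z : Z) (v : ℂ), ‖v‖ ≤ r z + 1 →
        ‖b (z, v)‖ ≤ C * ‖v‖ ^ 2 * ((1 + r z) ^ 2)⁻¹)
      (T : ℝ), 1 < T →
      (∫⁻ s in Set.Ioo (0 : ℝ) T, ENNReal.ofReal s⁻¹ *
          ∫⁻ z in {z : Z | r z ≤ Real.sqrt T},
            ENNReal.ofReal ‖∫ v in {v : ℂ | ‖v‖ ≤ r z + 1},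
              ((s ^ 2)⁻¹ * Real.exp (-‖v‖ ^ 2 / s)) • h (z, v)‖ ∂μ) ≤
        ENNReal.ofReal (C' * (Real.log T + 1)) := by
  refine ⟨324 * Real.pi * C * C₀, ?_⟩
  intro Z _ μ r hrm hr hμ h ℓ b g hmeas hgdef hlin h3 _ _ T hT
  set c := Real.sqrt T with hc
  have hc0 : (0:ℝ) ≤ c := Real.sqrt_nonneg T
  set K := 108 * Real.pi * C with hK
  have hK0 : 0 ≤ K := by rw [hK]; positivity
  set Φ : ℝ → ℝ → ℝ≥0∞ := fun s ρ =>
    ENNReal.ofReal (min (K * Real.sqrt s * ((ρ + 1) ^ 3)⁻¹) (K * (s ^ 2)⁻¹ * (ρ + 1) ^ 2))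
    with hΦ
  have hΦmeas : ∀ s, Measurable (Φ s) := by
    intro s
    rw [hΦ]
    apply Measurable.ennreal_ofReal
    apply Measurable.min
    · fun_prop
    · fun_prop
  have point : ∀ s : ℝ, 0 < s → ∀ z : Z,
      ENNReal.ofReal ‖∫ v in {v : ℂ | ‖v‖ ≤ r z + 1},
        ((s ^ 2)⁻¹ * Real.exp (-‖v‖ ^ 2 / s)) • h (z, v)‖ ≤ Φ s (r z) := by
    intro s hs z
    have hR : 1 ≤ r z + 1 := by linarith [hr z]
    have hb : ∀ v : ℂ, ‖v‖ ≤ r z + 1 → ‖h (z, v)‖ ≤ C * ‖v‖ ^ 3 * ((r z + 1) ^ 3)⁻¹ := by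
      intro v hv
      have := h3 z v hv
      rwa [add_comm 1 (r z)] at this
    simp only [hΦ]
    rcases le_total (K * Real.sqrt s * ((r z + 1) ^ 3)⁻¹) (K * (s ^ 2)⁻¹ * (r z + 1) ^ 2)
      with hmin | hmin
    · rw [min_eq_left hmin, hK]
      exact boundA hC hs hR _ hb
    · rw [min_eq_right hmin, hK]
      exact boundB hC hs hR _ hb
  set H : ℝ → ℝ → ℝ≥0∞ := fun s ρ =>
    ENNReal.ofReal C₀ * (ENNReal.ofReal ρ * (ENNReal.ofReal s⁻¹ * Φ s ρ)) with hH
  have per_s : ∀ s ∈ Ioo (0:ℝ) T,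
      (ENNReal.ofReal s⁻¹ *
        ∫⁻ z in {z : Z | r z ≤ c},
          ENNReal.ofReal ‖∫ v in {v : ℂ | ‖v‖ ≤ r z + 1},
            ((s ^ 2)⁻¹ * Real.exp (-‖v‖ ^ 2 / s)) • h (z, v)‖ ∂μ) ≤
      ∫⁻ ρ in Icc (0:ℝ) c, H s ρ := by
    intro s hs
    have h1 : (∫⁻ z in {z : Z | r z ≤ c},
        ENNReal.ofReal ‖∫ v in {v : ℂ | ‖v‖ ≤ r z + 1},
          ((s ^ 2)⁻¹ * Real.exp (-‖v‖ ^ 2 / s)) • h (z, v)‖ ∂μ) ≤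
        ∫⁻ z in {z : Z | r z ≤ c}, Φ s (r z) ∂μ :=
      lintegral_mono fun z => point s hs.1 z
    have h2 := push_lemma μ hrm hr hμ (Φ s) (hΦmeas s) hc0
    calc (ENNReal.ofReal s⁻¹ *
          ∫⁻ z in {z : Z | r z ≤ c},
            ENNReal.ofReal ‖∫ v in {v : ℂ | ‖v‖ ≤ r z + 1},
              ((s ^ 2)⁻¹ * Real.exp (-‖v‖ ^ 2 / s)) • h (z, v)‖ ∂μ)
        ≤ ENNReal.ofReal s⁻¹ *
            (ENNReal.ofReal C₀ * ∫⁻ ρ in Icc (0:ℝ) c, ENNReal.ofReal ρ * Φ s ρ) :=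
          mul_le_mul_right (h1.trans h2) _
      _ = ENNReal.ofReal C₀ *
            (ENNReal.ofReal s⁻¹ * ∫⁻ ρ in Icc (0:ℝ) c, ENNReal.ofReal ρ * Φ s ρ) := by
          ring
      _ = ∫⁻ ρ in Icc (0:ℝ) c,
            ENNReal.ofReal C₀ * (ENNReal.ofReal s⁻¹ * (ENNReal.ofReal ρ * Φ s ρ)) := by
          rw [lintegral_const_mul' (ENNReal.ofReal C₀) _ ENNReal.ofReal_ne_top,
            lintegral_const_mul' (ENNReal.ofReal s⁻¹) _ ENNReal.ofReal_ne_top]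
      _ = ∫⁻ ρ in Icc (0:ℝ) c, H s ρ := by
          apply lintegral_congr
          intro ρ
          rw [hH]
          ring
  have hswap : (∫⁻ s in Ioo (0:ℝ) T, ∫⁻ ρ in Icc (0:ℝ) c, H s ρ) =
      ∫⁻ ρ in Icc (0:ℝ) c, ∫⁻ s in Ioo (0:ℝ) T, H s ρ := by
    apply lintegral_lintegral_swap
    apply Measurable.aemeasurable
    rw [hH, hΦ]
    simp only [Function.uncurry_def]
    apply Measurable.fun_mul measurable_const
    apply Measurable.fun_mul (by fun_prop)
    apply Measurable.fun_mul (by fun_prop)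
    apply Measurable.ennreal_ofReal
    apply Measurable.min
    · fun_prop
    · fun_prop
  have per_ρ : ∀ ρ ∈ Icc (0:ℝ) c,
      (∫⁻ s in Ioo (0:ℝ) T, H s ρ) ≤
        ENNReal.ofReal (3 * K * C₀) * ENNReal.ofReal (ρ * ((ρ + 1) ^ 2)⁻¹) := by
    intro ρ hρ
    have hR : 1 ≤ ρ + 1 := by linarith [hρ.1]
    have hsint := s_integral (K := K) (R := ρ + 1) T hK0 hR
    calc (∫⁻ s in Ioo (0:ℝ) T, H s ρ)
        = ENNReal.ofReal C₀ * (ENNReal.ofReal ρ *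
            ∫⁻ s in Ioo (0:ℝ) T, ENNReal.ofReal s⁻¹ * Φ s ρ) := by
          rw [lintegral_const_mul' _ _ ENNReal.ofReal_ne_top,
            lintegral_const_mul' _ _ ENNReal.ofReal_ne_top]
      _ ≤ ENNReal.ofReal C₀ * (ENNReal.ofReal ρ *
            ENNReal.ofReal (3 * K * ((ρ + 1) ^ 2)⁻¹)) := by
          apply mul_le_mul_right
          apply mul_le_mul_right
          exact hsint
      _ = ENNReal.ofReal (3 * K * C₀) * ENNReal.ofReal (ρ * ((ρ + 1) ^ 2)⁻¹) := by
          rw [← ENNReal.ofReal_mul hρ.1, ← ENNReal.ofReal_mul hC₀,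
            ← ENNReal.ofReal_mul (by positivity : (0:ℝ) ≤ 3 * K * C₀)]
          congr 1
          ring
  have hlog : Real.log (1 + c) ≤ Real.log T + 1 := by
    have h1 : (1:ℝ) ≤ c := by
      rw [hc, show (1:ℝ) = Real.sqrt 1 from (Real.sqrt_one).symm]
      exact Real.sqrt_le_sqrt hT.le
    have h3' : Real.log (1 + c) ≤ Real.log (2 * c) :=
      Real.log_le_log (by linarith) (by linarith)
    have h4 : Real.log (2 * c) = Real.log 2 + Real.log c :=
      Real.log_mul (by norm_num) (by linarith)
    have h5 : Real.log c = Real.log T / 2 := by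
      rw [hc, Real.log_sqrt (by linarith : (0:ℝ) ≤ T)]
    have h6 : Real.log 2 ≤ 1 := by nlinarith [Real.log_two_lt_d9]
    have h7 : 0 ≤ Real.log T := Real.log_nonneg hT.le
    linarith
  calc (∫⁻ s in Set.Ioo (0 : ℝ) T, ENNReal.ofReal s⁻¹ *
          ∫⁻ z in {z : Z | r z ≤ c},
            ENNReal.ofReal ‖∫ v in {v : ℂ | ‖v‖ ≤ r z + 1},
              ((s ^ 2)⁻¹ * Real.exp (-‖v‖ ^ 2 / s)) • h (z, v)‖ ∂μ)
      ≤ ∫⁻ s in Ioo (0:ℝ) T, ∫⁻ ρ in Icc (0:ℝ) c, H s ρ :=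
        lintegral_mono_ae ((ae_restrict_iff' measurableSet_Ioo).2 (ae_of_all _ per_s))
    _ = ∫⁻ ρ in Icc (0:ℝ) c, ∫⁻ s in Ioo (0:ℝ) T, H s ρ := hswap
    _ ≤ ∫⁻ ρ in Icc (0:ℝ) c,
          ENNReal.ofReal (3 * K * C₀) * ENNReal.ofReal (ρ * ((ρ + 1) ^ 2)⁻¹) :=
        lintegral_mono_ae ((ae_restrict_iff' measurableSet_Icc).2 (ae_of_all _ per_ρ))
    _ = ENNReal.ofReal (3 * K * C₀) *
          ∫⁻ ρ in Icc (0:ℝ) c, ENNReal.ofReal (ρ * ((ρ + 1) ^ 2)⁻¹) :=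
        lintegral_const_mul' _ _ ENNReal.ofReal_ne_top
    _ ≤ ENNReal.ofReal (3 * K * C₀) * ENNReal.ofReal (Real.log (1 + c)) :=
        mul_le_mul_right (log_integral hc0) _
    _ ≤ ENNReal.ofReal (324 * Real.pi * C * C₀ * (Real.log T + 1)) := by
        rw [← ENNReal.ofReal_mul (by positivity)]
        apply ENNReal.ofReal_le_ofReal
        have hKC : 3 * K * C₀ = 324 * Real.pi * C * C₀ := by rw [hK]; ring
        rw [hKC]
        have hpos : (0:ℝ) ≤ 324 * Real.pi * C * C₀ := by positivity
        have hln : 0 ≤ Real.log (1 + c) := Real.log_nonneg (by linarith)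
        nlinarith [mul_le_mul_of_nonneg_left hlog hpos]
end

section
/- Let C₀, C, γ > 0. Let (Z, μ) be a measure space and r : Z → [0,∞) a measurable function such that μ(r⁻¹(A)) ≤ C₀ ∫_A ρ dρ for every measurable A ⊆ [0,∞). Let E : (0,∞) × Z × ℂ → ℂ be measurable and suppose that for all s > 0, z ∈ Z, and v ∈ ℂ with |v| ≤ r(z) + 1: (i) |E(s,z,v)| ≤ C (1 + r(z)²)⁻² e^{−γ|v|²/s} whenever s ≤ 1 + r(z)², and (ii) |E(s,z,v)| ≤ C (s⁻² + s⁻¹(1 + r(z)²)⁻¹) always. Then there is a constant C′ depending only on C, C₀ and γ such that for every T > 1, ∫₀^T (1/s) ∫∫_{{(z,v) : r(z) ≤ √T, |v| ≤ r(z)+1}} |E(s,z,v)| dA(v) dμ(z) ds ≤ C′(log T + 1). -/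
open MeasureTheory Set Real

-- Gaussian lintegral over ℂ
lemma gauss_lint {b : ℝ} (hb : 0 < b) :
    ∫⁻ v : ℂ, ENNReal.ofReal (Real.exp (-b * ‖v‖ ^ 2)) = ENNReal.ofReal (π / b) := by
  have hint : Integrable (fun v : ℂ => Real.exp (-b * ‖v‖ ^ 2)) := by
    have h := (GaussianFourier.integrable_cexp_neg_mul_sq_norm_add (V := ℂ) (b := (b : ℂ))
      (by simpa using hb) 0 (0 : ℂ)).norm
    refine h.congr (Filter.Eventually.of_forall fun v => ?_)
    simp [Complex.norm_exp, ← Complex.ofReal_pow]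
  rw [← ofReal_integral_eq_lintegral_ofReal hint
    (Filter.Eventually.of_forall fun v => (Real.exp_pos _).le)]
  congr 1
  rw [GaussianFourier.integral_rexp_neg_mul_sq_norm hb]
  norm_num [Complex.finrank_real_complex]

lemma lint_inv_sq {m : ℝ} (hm : 0 < m) :
    ∫⁻ s in Set.Ioi m, ENNReal.ofReal ((s ^ 2)⁻¹) = ENNReal.ofReal m⁻¹ := by
  have hcong : ∫⁻ s in Set.Ioi m, ENNReal.ofReal ((s ^ 2)⁻¹)
      = ∫⁻ s in Set.Ioi m, ENNReal.ofReal (s ^ (-2 : ℝ)) := by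
    refine setLIntegral_congr_fun measurableSet_Ioi
      (fun x hx => ?_)
    have hx0 : 0 < x := hm.trans hx
    rw [show (-2 : ℝ) = -((2 : ℕ) : ℝ) by norm_num, Real.rpow_neg hx0.le,
      Real.rpow_natCast]
  rw [hcong, ← ofReal_integral_eq_lintegral_ofReal
      (integrableOn_Ioi_rpow_of_lt (by norm_num) hm)
      ((ae_restrict_iff' measurableSet_Ioi).2 (Filter.Eventually.of_forall
        fun x hx => Real.rpow_nonneg (hm.trans hx).le _))]
  rw [integral_Ioi_rpow_of_lt (by norm_num) hm]
  norm_num [Real.rpow_neg_one]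

lemma lint_inv {a : ℝ} (ha : 1 ≤ a) :
    ∫⁻ ρ in Set.Ioc 1 a, ENNReal.ofReal ρ⁻¹ = ENNReal.ofReal (Real.log a) := by
  have hsub : Set.Ioc (1:ℝ) a ⊆ Set.Icc 1 a := Set.Ioc_subset_Icc_self
  have hint : IntegrableOn (fun ρ : ℝ => ρ⁻¹) (Set.Ioc 1 a) := by
    refine (ContinuousOn.integrableOn_compact isCompact_Icc ?_).mono_set hsub
    exact continuousOn_id.inv₀ fun x hx => ne_of_gt (lt_of_lt_of_le one_pos hx.1)
  rw [← ofReal_integral_eq_lintegral_ofReal hint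
      ((ae_restrict_iff' measurableSet_Ioc).2 (Filter.Eventually.of_forall
        fun x hx => (inv_nonneg).2 (le_of_lt (lt_of_lt_of_le one_pos hx.1.le))))]
  congr 1
  rw [← intervalIntegral.integral_of_le ha, integral_inv_of_pos one_pos
    (lt_of_lt_of_le one_pos ha), div_one]

lemma push {Z : Type} [MeasurableSpace Z] (μ : Measure Z) {C₀ : ℝ} {r : Z → ℝ}
    (hr : Measurable r) (hr0 : ∀ z, 0 ≤ r z)
    (hμ : ∀ A : Set ℝ, MeasurableSet A → A ⊆ Set.Ici 0 →
      μ (r ⁻¹' A) ≤ ENNReal.ofReal C₀ * ∫⁻ ρ in A, ENNReal.ofReal ρ)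
    {φ : ℝ → ENNReal} (hφ : Measurable φ) {a : ℝ} :
    ∫⁻ z in {z | r z ≤ a}, φ (r z) ∂μ
      ≤ ENNReal.ofReal C₀ * ∫⁻ ρ in Set.Icc 0 a, ENNReal.ofReal ρ * φ ρ := by
  have hset : {z | r z ≤ a} = r ⁻¹' (Set.Icc 0 a) := by
    ext z; simp [Set.mem_Icc, hr0 z]
  rw [hset, ← setLIntegral_map measurableSet_Icc hφ hr]
  have hle : (μ.map r).restrict (Set.Icc 0 a)
      ≤ (ENNReal.ofReal C₀ • (volume.withDensity fun ρ => ENNReal.ofReal ρ)).restrict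
          (Set.Icc 0 a) := by
    refine Measure.le_iff.2 fun s hs => ?_
    rw [Measure.restrict_apply hs, Measure.restrict_apply hs,
      Measure.map_apply hr (hs.inter measurableSet_Icc), Measure.smul_apply,
      withDensity_apply _ (hs.inter measurableSet_Icc)]
    exact hμ _ (hs.inter measurableSet_Icc) fun x hx => hx.2.1
  calc ∫⁻ x in Set.Icc 0 a, φ x ∂(μ.map r)
      ≤ ∫⁻ x in Set.Icc 0 a, φ x
          ∂(ENNReal.ofReal C₀ • (volume.withDensity fun ρ => ENNReal.ofReal ρ)) :=
        lintegral_mono' hle le_rfl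
    _ = ENNReal.ofReal C₀ * ∫⁻ x in Set.Icc 0 a, φ x
          ∂(volume.withDensity fun ρ => ENNReal.ofReal ρ) := by
        rw [Measure.restrict_smul, lintegral_smul_measure, smul_eq_mul]
    _ = ENNReal.ofReal C₀ * ∫⁻ ρ in Set.Icc 0 a, ENNReal.ofReal ρ * φ ρ := by
        rw [restrict_withDensity measurableSet_Icc,
          lintegral_withDensity_eq_lintegral_mul _ ENNReal.measurable_ofReal hφ]
        rfl

noncomputable def hfun (C γ s ρ : ℝ) : ℝ :=
  if s ≤ 1 + ρ ^ 2 then (C * π / γ) * ((1 + ρ ^ 2) ^ 2)⁻¹ else (4 * π * C) * (s ^ 2)⁻¹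

lemma hfun_meas (C γ s : ℝ) : Measurable fun ρ => ENNReal.ofReal (hfun C γ s ρ) := by
  apply ENNReal.measurable_ofReal.comp
  exact Measurable.ite (measurableSet_le measurable_const (by fun_prop)) (by fun_prop)
    (by fun_prop)

lemma hfun_meas2 (C γ : ℝ) :
    Measurable (Function.uncurry fun s ρ => ENNReal.ofReal ρ * ENNReal.ofReal (hfun C γ s ρ)) := by
  change Measurable ((fun p : ℝ × ℝ => ENNReal.ofReal p.2) * fun p => ENNReal.ofReal (hfun C γ p.1 p.2))
  apply Measurable.mul
  · exact ENNReal.measurable_ofReal.comp measurable_snd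
  · apply ENNReal.measurable_ofReal.comp
    exact Measurable.ite (measurableSet_le measurable_fst (by fun_prop)) (by fun_prop)
      (by fun_prop)

lemma hfun_int {C γ : ℝ} (hC : 0 < C) (hγ : 0 < γ) {ρ : ℝ} (T : ℝ) :
    ∫⁻ s in Set.Ioo 0 T, ENNReal.ofReal (hfun C γ s ρ)
      ≤ ENNReal.ofReal ((C * π / γ + 4 * π * C) * (1 + ρ ^ 2)⁻¹) := by
  set m := 1 + ρ ^ 2 with hm
  have hm0 : 0 < m := by positivity
  have hpt : ∀ s : ℝ, ENNReal.ofReal (hfun C γ s ρ) ≤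
      (Set.Iic m).indicator (fun _ => ENNReal.ofReal ((C * π / γ) * (m ^ 2)⁻¹)) s
      + (Set.Ioi m).indicator (fun s => ENNReal.ofReal ((4 * π * C) * (s ^ 2)⁻¹)) s := by
    intro s
    by_cases hs : s ≤ m
    · rw [Set.indicator_of_mem (Set.mem_Iic.2 hs),
        Set.indicator_of_notMem (fun hmem => hs.not_gt (Set.mem_Ioi.1 hmem))]
      simp [hfun, ← hm, if_pos hs]
    · rw [Set.indicator_of_notMem (fun hmem => hs (Set.mem_Iic.1 hmem)),
        Set.indicator_of_mem (Set.mem_Ioi.2 (not_le.1 hs))]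
      simp [hfun, ← hm, if_neg hs]
  have part1 : ∫⁻ s in Set.Ioo 0 T,
      (Set.Iic m).indicator (fun _ => ENNReal.ofReal ((C * π / γ) * (m ^ 2)⁻¹)) s
      ≤ ENNReal.ofReal ((C * π / γ) * (m ^ 2)⁻¹) * ENNReal.ofReal m := by
    rw [lintegral_indicator measurableSet_Iic, Measure.restrict_restrict measurableSet_Iic,
      setLIntegral_const]
    have hsub : Set.Iic m ∩ Set.Ioo 0 T ⊆ Set.Ioc 0 m := fun x hx =>
      Set.mem_Ioc.2 ⟨hx.2.1, hx.1⟩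
    refine mul_le_mul_right ((measure_mono hsub).trans ?_) _
    rw [Real.volume_Ioc, sub_zero]
  have part2 : ∫⁻ s in Set.Ioo 0 T,
      (Set.Ioi m).indicator (fun s => ENNReal.ofReal ((4 * π * C) * (s ^ 2)⁻¹)) s
      ≤ ENNReal.ofReal (4 * π * C) * ENNReal.ofReal m⁻¹ := by
    rw [lintegral_indicator measurableSet_Ioi, Measure.restrict_restrict measurableSet_Ioi]
    calc ∫⁻ s in Set.Ioi m ∩ Set.Ioo 0 T, ENNReal.ofReal ((4 * π * C) * (s ^ 2)⁻¹)
        ≤ ∫⁻ s in Set.Ioi m, ENNReal.ofReal ((4 * π * C) * (s ^ 2)⁻¹) :=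
          lintegral_mono_set Set.inter_subset_left
      _ = ENNReal.ofReal (4 * π * C) * ∫⁻ s in Set.Ioi m, ENNReal.ofReal ((s ^ 2)⁻¹) := by
          simp_rw [ENNReal.ofReal_mul (by positivity : (0:ℝ) ≤ 4 * π * C)]
          exact lintegral_const_mul' _ _ ENNReal.ofReal_ne_top
      _ = ENNReal.ofReal (4 * π * C) * ENNReal.ofReal m⁻¹ := by rw [lint_inv_sq hm0]
  calc ∫⁻ s in Set.Ioo 0 T, ENNReal.ofReal (hfun C γ s ρ)
      ≤ ∫⁻ s in Set.Ioo 0 T,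
        ((Set.Iic m).indicator (fun _ => ENNReal.ofReal ((C * π / γ) * (m ^ 2)⁻¹)) s
          + (Set.Ioi m).indicator (fun s => ENNReal.ofReal ((4 * π * C) * (s ^ 2)⁻¹)) s) :=
        lintegral_mono hpt
    _ = (∫⁻ s in Set.Ioo 0 T,
          (Set.Iic m).indicator (fun _ => ENNReal.ofReal ((C * π / γ) * (m ^ 2)⁻¹)) s)
        + ∫⁻ s in Set.Ioo 0 T,
          (Set.Ioi m).indicator (fun s => ENNReal.ofReal ((4 * π * C) * (s ^ 2)⁻¹)) s :=
        lintegral_add_left (measurable_const.indicator measurableSet_Iic) _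
    _ ≤ ENNReal.ofReal ((C * π / γ) * (m ^ 2)⁻¹) * ENNReal.ofReal m
        + ENNReal.ofReal (4 * π * C) * ENNReal.ofReal m⁻¹ := add_le_add part1 part2
    _ = ENNReal.ofReal ((C * π / γ) * (m ^ 2)⁻¹ * m + (4 * π * C) * m⁻¹) := by
        rw [← ENNReal.ofReal_mul (by positivity), ← ENNReal.ofReal_mul (by positivity),
          ← ENNReal.ofReal_add (by positivity) (by positivity)]
    _ = ENNReal.ofReal ((C * π / γ + 4 * π * C) * m⁻¹) := by
        congr 1; field_simp

lemma rho_step {K T : ℝ} (hK : 0 ≤ K) (hT : 1 < T) :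
    ∫⁻ ρ in Set.Icc 0 (Real.sqrt T), ENNReal.ofReal (ρ * (K * (1 + ρ ^ 2)⁻¹))
      ≤ ENNReal.ofReal (K * (Real.log T + 1)) := by
  have hT0 : (0:ℝ) < T := lt_trans one_pos hT
  have h1T : 1 ≤ Real.sqrt T := by
    rw [show (1:ℝ) = Real.sqrt 1 by simp]; exact Real.sqrt_le_sqrt hT.le
  have hsubset : Set.Icc 0 (Real.sqrt T) ⊆ Set.Icc 0 1 ∪ Set.Ioc 1 (Real.sqrt T) := by
    intro x hx
    rcases le_or_gt x 1 with h | h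
    · exact Or.inl ⟨hx.1, h⟩
    · exact Or.inr ⟨h, hx.2⟩
  have pA : ∫⁻ ρ in Set.Icc 0 1, ENNReal.ofReal (ρ * (K * (1 + ρ ^ 2)⁻¹))
      ≤ ENNReal.ofReal K := by
    have hb : ∀ ρ ∈ Set.Icc (0:ℝ) 1, ENNReal.ofReal (ρ * (K * (1 + ρ ^ 2)⁻¹))
        ≤ ENNReal.ofReal K := by
      intro ρ hρ
      refine ENNReal.ofReal_le_ofReal ?_
      have hi0 : (0:ℝ) ≤ (1 + ρ ^ 2)⁻¹ := by positivity
      have hi1 : (1 + ρ ^ 2)⁻¹ ≤ 1 := by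
        rw [inv_le_one₀ (by positivity)]; nlinarith [sq_nonneg ρ]
      have h1 : K * (1 + ρ ^ 2)⁻¹ ≤ K := by nlinarith
      calc ρ * (K * (1 + ρ ^ 2)⁻¹) ≤ 1 * (K * (1 + ρ ^ 2)⁻¹) :=
            mul_le_mul_of_nonneg_right hρ.2 (by positivity)
        _ = K * (1 + ρ ^ 2)⁻¹ := one_mul _
        _ ≤ K := h1
    calc ∫⁻ ρ in Set.Icc 0 1, ENNReal.ofReal (ρ * (K * (1 + ρ ^ 2)⁻¹))
        ≤ ∫⁻ _ in Set.Icc (0:ℝ) 1, ENNReal.ofReal K := setLIntegral_mono' measurableSet_Icc hb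
      _ = ENNReal.ofReal K * volume (Set.Icc (0:ℝ) 1) := setLIntegral_const _ _
      _ = ENNReal.ofReal K := by rw [Real.volume_Icc]; norm_num
  have pB : ∫⁻ ρ in Set.Ioc 1 (Real.sqrt T), ENNReal.ofReal (ρ * (K * (1 + ρ ^ 2)⁻¹))
      ≤ ENNReal.ofReal K * ENNReal.ofReal (Real.log (Real.sqrt T)) := by
    have hb : ∀ ρ ∈ Set.Ioc (1:ℝ) (Real.sqrt T), ENNReal.ofReal (ρ * (K * (1 + ρ ^ 2)⁻¹))
        ≤ ENNReal.ofReal K * ENNReal.ofReal ρ⁻¹ := by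
      intro ρ hρ
      have hρ0 : (0:ℝ) < ρ := lt_trans one_pos hρ.1
      rw [← ENNReal.ofReal_mul hK]
      refine ENNReal.ofReal_le_ofReal ?_
      have key2 : ρ * (1 + ρ ^ 2)⁻¹ ≤ ρ⁻¹ := by
        rw [← div_eq_mul_inv, div_le_iff₀ (by positivity : (0:ℝ) < 1 + ρ ^ 2)]
        have e : ρ⁻¹ * (1 + ρ ^ 2) = ρ⁻¹ + ρ := by field_simp
        rw [e]
        have : (0:ℝ) ≤ ρ⁻¹ := by positivity
        linarith
      calc ρ * (K * (1 + ρ ^ 2)⁻¹) = K * (ρ * (1 + ρ ^ 2)⁻¹) := by ring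
        _ ≤ K * ρ⁻¹ := mul_le_mul_of_nonneg_left key2 hK
    calc ∫⁻ ρ in Set.Ioc 1 (Real.sqrt T), ENNReal.ofReal (ρ * (K * (1 + ρ ^ 2)⁻¹))
        ≤ ∫⁻ ρ in Set.Ioc 1 (Real.sqrt T), ENNReal.ofReal K * ENNReal.ofReal ρ⁻¹ :=
          setLIntegral_mono' measurableSet_Ioc hb
      _ = ENNReal.ofReal K * ∫⁻ ρ in Set.Ioc 1 (Real.sqrt T), ENNReal.ofReal ρ⁻¹ :=
          lintegral_const_mul' _ _ ENNReal.ofReal_ne_top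
      _ = ENNReal.ofReal K * ENNReal.ofReal (Real.log (Real.sqrt T)) := by rw [lint_inv h1T]
  calc ∫⁻ ρ in Set.Icc 0 (Real.sqrt T), ENNReal.ofReal (ρ * (K * (1 + ρ ^ 2)⁻¹))
      ≤ ∫⁻ ρ in Set.Icc 0 1 ∪ Set.Ioc 1 (Real.sqrt T),
          ENNReal.ofReal (ρ * (K * (1 + ρ ^ 2)⁻¹)) := lintegral_mono_set hsubset
    _ ≤ (∫⁻ ρ in Set.Icc 0 1, ENNReal.ofReal (ρ * (K * (1 + ρ ^ 2)⁻¹)))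
        + ∫⁻ ρ in Set.Ioc 1 (Real.sqrt T), ENNReal.ofReal (ρ * (K * (1 + ρ ^ 2)⁻¹)) :=
        lintegral_union_le _ _ _
    _ ≤ ENNReal.ofReal K + ENNReal.ofReal K * ENNReal.ofReal (Real.log (Real.sqrt T)) :=
        add_le_add pA pB
    _ = ENNReal.ofReal (K + K * Real.log (Real.sqrt T)) := by
        rw [← ENNReal.ofReal_mul hK,
          ← ENNReal.ofReal_add hK (mul_nonneg hK (Real.log_nonneg h1T))]
    _ ≤ ENNReal.ofReal (K * (Real.log T + 1)) := by
        refine ENNReal.ofReal_le_ofReal ?_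
        have hlog : Real.log (Real.sqrt T) = Real.log T / 2 := Real.log_sqrt hT0.le
        have hlogT : 0 ≤ Real.log T := Real.log_nonneg hT.le
        nlinarith

/-- Lemma 6.5 (abstract form): the error `E = K − p` between the heat kernel and
its parametrix contributes at most logarithmically to the torsion integral. -/
theorem stmt_5 (C₀ C γ : ℝ) (hC₀ : 0 < C₀) (hC : 0 < C) (hγ : 0 < γ) :
    ∃ C' : ℝ, ∀ (Z : Type) [MeasurableSpace Z] (μ : Measure Z)
      (r : Z → ℝ) (_ : Measurable r) (_ : ∀ z, 0 ≤ r z)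
      (_ : ∀ A : Set ℝ, MeasurableSet A → A ⊆ Set.Ici 0 →
        μ (r ⁻¹' A) ≤ ENNReal.ofReal C₀ * ∫⁻ ρ in A, ENNReal.ofReal ρ)
      (E : ℝ × Z × ℂ → ℂ) (_ : Measurable E)
      (_ : ∀ (s : ℝ) (z : Z) (v : ℂ), 0 < s → ‖v‖ ≤ r z + 1 →
        s ≤ 1 + (r z) ^ 2 →
        ‖E (s, z, v)‖ ≤ C * ((1 + (r z) ^ 2) ^ 2)⁻¹ * Real.exp (-(γ * ‖v‖ ^ 2) / s))
      (_ : ∀ (s : ℝ) (z : Z) (v : ℂ), 0 < s → ‖v‖ ≤ r z + 1 →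
        ‖E (s, z, v)‖ ≤ C * ((s ^ 2)⁻¹ + s⁻¹ * (1 + (r z) ^ 2)⁻¹))
      (T : ℝ), 1 < T →
      (∫⁻ s in Set.Ioo (0 : ℝ) T, ENNReal.ofReal s⁻¹ *
          ∫⁻ z in {z : Z | r z ≤ Real.sqrt T},
            (∫⁻ v in {v : ℂ | ‖v‖ ≤ r z + 1}, ENNReal.ofReal ‖E (s, z, v)‖) ∂μ) ≤
        ENNReal.ofReal (C' * (Real.log T + 1)) := by
  refine ⟨C₀ * (C * π / γ + 4 * π * C), ?_⟩
  intro Z _ μ r hr hr0 hμ E hE hE1 hE2 T hT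
  -- the key pointwise-in-(s,z) bound on the inner v-integral
  have key : ∀ (s : ℝ), 0 < s → ∀ z : Z,
      (∫⁻ v in {v : ℂ | ‖v‖ ≤ r z + 1}, ENNReal.ofReal ‖E (s, z, v)‖)
        ≤ ENNReal.ofReal (s * hfun C γ s (r z)) := by
    intro s hs z
    have hR0 : 0 ≤ r z := hr0 z
    set R := r z with hR
    set m := 1 + R ^ 2 with hm
    have hm1 : (1:ℝ) ≤ m := by nlinarith [sq_nonneg R]
    have hm0 : (0:ℝ) < m := by linarith
    by_cases hcase : s ≤ m
    · -- Gaussian regime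
      have hpt : ∀ v ∈ {v : ℂ | ‖v‖ ≤ R + 1}, ENNReal.ofReal ‖E (s, z, v)‖
          ≤ ENNReal.ofReal (C * (m ^ 2)⁻¹ * Real.exp (-(γ / s) * ‖v‖ ^ 2)) := by
        intro v hv
        refine ENNReal.ofReal_le_ofReal ((hE1 s z v hs hv hcase).trans_eq ?_)
        rw [← hm]
        congr 1
        field_simp
      calc (∫⁻ v in {v : ℂ | ‖v‖ ≤ R + 1}, ENNReal.ofReal ‖E (s, z, v)‖)
          ≤ ∫⁻ v in {v : ℂ | ‖v‖ ≤ R + 1},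
              ENNReal.ofReal (C * (m ^ 2)⁻¹ * Real.exp (-(γ / s) * ‖v‖ ^ 2)) :=
            setLIntegral_mono (by fun_prop) hpt
        _ ≤ ∫⁻ v : ℂ, ENNReal.ofReal (C * (m ^ 2)⁻¹ * Real.exp (-(γ / s) * ‖v‖ ^ 2)) :=
            setLIntegral_le_lintegral _ _
        _ = ENNReal.ofReal (C * (m ^ 2)⁻¹)
            * ∫⁻ v : ℂ, ENNReal.ofReal (Real.exp (-(γ / s) * ‖v‖ ^ 2)) := by
            simp_rw [ENNReal.ofReal_mul (by positivity : (0:ℝ) ≤ C * (m ^ 2)⁻¹)]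
            exact lintegral_const_mul' _ _ ENNReal.ofReal_ne_top
        _ = ENNReal.ofReal (C * (m ^ 2)⁻¹) * ENNReal.ofReal (π / (γ / s)) := by
            rw [gauss_lint (div_pos hγ hs)]
        _ = ENNReal.ofReal (s * hfun C γ s R) := by
            rw [← ENNReal.ofReal_mul (by positivity)]
            congr 1
            rw [hfun, if_pos (by rw [← hm]; exact hcase), ← hm]
            field_simp
    · push_neg at hcase
      have hbound : ∀ v ∈ {v : ℂ | ‖v‖ ≤ R + 1}, ENNReal.ofReal ‖E (s, z, v)‖
          ≤ ENNReal.ofReal (2 * C * s⁻¹ * m⁻¹) := by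
        intro v hv
        refine ENNReal.ofReal_le_ofReal ((hE2 s z v hs hv).trans ?_)
        rw [← hm]
        have hsm : s⁻¹ ≤ m⁻¹ := inv_anti₀ hm0 hcase.le
        have h1 : (s ^ 2)⁻¹ ≤ s⁻¹ * m⁻¹ := by
          rw [sq, mul_inv]
          exact mul_le_mul_of_nonneg_left hsm (by positivity)
        nlinarith [mul_pos (inv_pos.2 hs) (inv_pos.2 hm0)]
      have hball : volume {v : ℂ | ‖v‖ ≤ R + 1} = ENNReal.ofReal ((R + 1) ^ 2 * π) := by
        have hset : {v : ℂ | ‖v‖ ≤ R + 1} = Metric.closedBall 0 (R + 1) := by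
          ext v; simp [Metric.mem_closedBall, dist_zero_right]
        rw [hset, Complex.volume_closedBall, ENNReal.ofReal_mul (by positivity),
          ENNReal.ofReal_pow (by positivity : (0:ℝ) ≤ R + 1), ← NNReal.coe_real_pi,
          ENNReal.ofReal_coe_nnreal]
      calc (∫⁻ v in {v : ℂ | ‖v‖ ≤ R + 1}, ENNReal.ofReal ‖E (s, z, v)‖)
          ≤ ∫⁻ _ in {v : ℂ | ‖v‖ ≤ R + 1}, ENNReal.ofReal (2 * C * s⁻¹ * m⁻¹) :=
            setLIntegral_mono measurable_const hbound
        _ = ENNReal.ofReal (2 * C * s⁻¹ * m⁻¹) * volume {v : ℂ | ‖v‖ ≤ R + 1} :=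
            setLIntegral_const _ _
        _ = ENNReal.ofReal (2 * C * s⁻¹ * m⁻¹ * ((R + 1) ^ 2 * π)) := by
            rw [hball, ← ENNReal.ofReal_mul (by positivity)]
        _ ≤ ENNReal.ofReal (s * hfun C γ s R) := by
            refine ENNReal.ofReal_le_ofReal ?_
            rw [hfun, if_neg (by rw [← hm]; exact not_le.2 hcase)]
            have hRm : (R + 1) ^ 2 ≤ 2 * m := by nlinarith [sq_nonneg (R - 1)]
            have h2 : (R + 1) ^ 2 * m⁻¹ ≤ 2 := by
              calc (R + 1) ^ 2 * m⁻¹ ≤ 2 * m * m⁻¹ :=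
                    mul_le_mul_of_nonneg_right hRm (by positivity)
                _ = 2 := by field_simp
            calc 2 * C * s⁻¹ * m⁻¹ * ((R + 1) ^ 2 * π)
                = (2 * C * s⁻¹ * π) * ((R + 1) ^ 2 * m⁻¹) := by ring
              _ ≤ (2 * C * s⁻¹ * π) * 2 := mul_le_mul_of_nonneg_left h2 (by positivity)
              _ = s * (4 * π * C * (s ^ 2)⁻¹) := by field_simp; ring
  -- per-s reduction to a radial integral
  have step1 : ∀ s ∈ Set.Ioo (0:ℝ) T,
      ENNReal.ofReal s⁻¹ *
          ∫⁻ z in {z : Z | r z ≤ Real.sqrt T},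
            (∫⁻ v in {v : ℂ | ‖v‖ ≤ r z + 1}, ENNReal.ofReal ‖E (s, z, v)‖) ∂μ
        ≤ ENNReal.ofReal C₀ * ∫⁻ ρ in Set.Icc 0 (Real.sqrt T),
            ENNReal.ofReal ρ * ENNReal.ofReal (hfun C γ s ρ) := by
    intro s hs
    have hs0 : 0 < s := hs.1
    calc ENNReal.ofReal s⁻¹ *
          ∫⁻ z in {z : Z | r z ≤ Real.sqrt T},
            (∫⁻ v in {v : ℂ | ‖v‖ ≤ r z + 1}, ENNReal.ofReal ‖E (s, z, v)‖) ∂μ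
        ≤ ENNReal.ofReal s⁻¹ *
            ∫⁻ z in {z : Z | r z ≤ Real.sqrt T},
              ENNReal.ofReal (s * hfun C γ s (r z)) ∂μ :=
          mul_le_mul_right (lintegral_mono fun z => key s hs0 z) _
      _ = ∫⁻ z in {z : Z | r z ≤ Real.sqrt T},
            ENNReal.ofReal s⁻¹ * ENNReal.ofReal (s * hfun C γ s (r z)) ∂μ :=
          (lintegral_const_mul' _ _ ENNReal.ofReal_ne_top).symm
      _ = ∫⁻ z in {z : Z | r z ≤ Real.sqrt T}, ENNReal.ofReal (hfun C γ s (r z)) ∂μ := by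
          refine lintegral_congr fun z => ?_
          rw [← ENNReal.ofReal_mul (by positivity)]
          congr 1
          field_simp
      _ ≤ ENNReal.ofReal C₀ * ∫⁻ ρ in Set.Icc 0 (Real.sqrt T),
            ENNReal.ofReal ρ * ENNReal.ofReal (hfun C γ s ρ) :=
          push μ hr hr0 hμ (hfun_meas C γ s)
  calc (∫⁻ s in Set.Ioo (0 : ℝ) T, ENNReal.ofReal s⁻¹ *
          ∫⁻ z in {z : Z | r z ≤ Real.sqrt T},
            (∫⁻ v in {v : ℂ | ‖v‖ ≤ r z + 1}, ENNReal.ofReal ‖E (s, z, v)‖) ∂μ)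
      ≤ ∫⁻ s in Set.Ioo (0 : ℝ) T, ENNReal.ofReal C₀ * ∫⁻ ρ in Set.Icc 0 (Real.sqrt T),
          ENNReal.ofReal ρ * ENNReal.ofReal (hfun C γ s ρ) :=
        setLIntegral_mono' measurableSet_Ioo step1
    _ = ENNReal.ofReal C₀ * ∫⁻ s in Set.Ioo (0 : ℝ) T, ∫⁻ ρ in Set.Icc 0 (Real.sqrt T),
          ENNReal.ofReal ρ * ENNReal.ofReal (hfun C γ s ρ) :=
        lintegral_const_mul' _ _ ENNReal.ofReal_ne_top
    _ = ENNReal.ofReal C₀ * ∫⁻ ρ in Set.Icc 0 (Real.sqrt T), ∫⁻ s in Set.Ioo (0 : ℝ) T,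
          ENNReal.ofReal ρ * ENNReal.ofReal (hfun C γ s ρ) := by
        rw [lintegral_lintegral_swap (hfun_meas2 C γ).aemeasurable]
    _ ≤ ENNReal.ofReal C₀ * ∫⁻ ρ in Set.Icc 0 (Real.sqrt T),
          ENNReal.ofReal (ρ * ((C * π / γ + 4 * π * C) * (1 + ρ ^ 2)⁻¹)) := by
        refine mul_le_mul_right (setLIntegral_mono' measurableSet_Icc fun ρ hρ => ?_) _
        calc ∫⁻ s in Set.Ioo (0 : ℝ) T, ENNReal.ofReal ρ * ENNReal.ofReal (hfun C γ s ρ)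
            = ENNReal.ofReal ρ * ∫⁻ s in Set.Ioo (0 : ℝ) T, ENNReal.ofReal (hfun C γ s ρ) :=
              lintegral_const_mul' _ _ ENNReal.ofReal_ne_top
          _ ≤ ENNReal.ofReal ρ
              * ENNReal.ofReal ((C * π / γ + 4 * π * C) * (1 + ρ ^ 2)⁻¹) :=
              mul_le_mul_right (hfun_int hC hγ T) _
          _ = ENNReal.ofReal (ρ * ((C * π / γ + 4 * π * C) * (1 + ρ ^ 2)⁻¹)) :=
              (ENNReal.ofReal_mul hρ.1).symm
    _ ≤ ENNReal.ofReal C₀ * ENNReal.ofReal ((C * π / γ + 4 * π * C) * (Real.log T + 1)) :=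
        mul_le_mul_right (rho_step (by positivity) hT) _
    _ = ENNReal.ofReal (C₀ * (C * π / γ + 4 * π * C) * (Real.log T + 1)) := by
        rw [← ENNReal.ofReal_mul hC₀.le]
        congr 1
        ring
end
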